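/- arXiv:math/0308071 — 8 statements merged into one kernel-verified Lean document; each statement's English description precedes it below -/
import Mathlib

section
/- Let D be the infinite dihedral group generated by two involutions s₁, s₂, acting on a set Y. Let O be a finite orbit of this action such that no point of O is fixed by s₁ and no point of O is fixed by s₂. Then |O| is even; moreover, if p is the smallest positive integer with (s₂s₁)^p w = w for some (equivalently any) w ∈ O, then |O| = 2p. -/
theorem dihedral_orbit_card {Y : Type*} (s₁ s₂ : Equiv.Perm Y)
    (h₁ : s₁ * s₁ = 1) (h₂ : s₂ * s₂ = 1) (w₀ : Y)
    (O : Set Y)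
    (hO : O = MulAction.orbit (Subgroup.closure ({s₁, s₂} : Set (Equiv.Perm Y))) w₀)
    (hfin : O.Finite)
    (hnofix : ∀ w ∈ O, s₁ w ≠ w ∧ s₂ w ≠ w) :
    Even O.ncard ∧
      ∀ p : ℕ, 0 < p → ((s₂ * s₁) ^ p) w₀ = w₀ →
        (∀ q : ℕ, 0 < q → ((s₂ * s₁) ^ q) w₀ = w₀ → p ≤ q) →
        O.ncard = 2 * p := by
  set r : Equiv.Perm Y := s₂ * s₁ with hr
  have hs₁inv : s₁⁻¹ = s₁ := by
    rw [inv_eq_iff_mul_eq_one]; exact h₁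
  have hs₂inv : s₂⁻¹ = s₂ := by
    rw [inv_eq_iff_mul_eq_one]; exact h₂
  have hsemi : SemiconjBy s₁ r r⁻¹ := by
    show s₁ * r = r⁻¹ * s₁
    rw [hr, mul_inv_rev, hs₁inv, hs₂inv, mul_assoc]
  have key : ∀ k : ℤ, s₁ * r ^ k = r ^ (-k) * s₁ := by
    intro k
    have := hsemi.zpow_right k
    rwa [inv_zpow, ← zpow_neg] at this
  -- composing powers of r applied to a point
  have comb : ∀ (a b : ℤ) (x : Y), (r ^ a) ((r ^ b) x) = (r ^ (a + b)) x := by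
    intro a b x
    rw [← Equiv.Perm.mul_apply, ← zpow_add]
  set H := Subgroup.closure ({s₁, s₂} : Set (Equiv.Perm Y)) with hH
  have hs₁H : s₁ ∈ H := Subgroup.subset_closure (by simp)
  have hs₂H : s₂ ∈ H := Subgroup.subset_closure (by simp)
  have hrH : ∀ k : ℤ, r ^ k ∈ H := fun k => zpow_mem (mul_mem hs₂H hs₁H) k
  -- structure of elements of H
  have struct : ∀ g ∈ H, ∃ k : ℤ, g = r ^ k ∨ g = r ^ k * s₁ := by
    intro g hg
    induction hg using Subgroup.closure_induction with
    | mem x hx =>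
        rcases hx with hx | hx
        · exact ⟨0, Or.inr (by simp [hx])⟩
        · refine ⟨1, Or.inr ?_⟩
          simp only [Set.mem_singleton_iff] at hx
          rw [hx, zpow_one, hr, mul_assoc, h₁, mul_one]
    | one => exact ⟨0, Or.inl (by simp)⟩
    | mul x y hx hy ihx ihy =>
        obtain ⟨k, hk⟩ := ihx
        obtain ⟨j, hj⟩ := ihy
        rcases hk with hk | hk <;> rcases hj with hj | hj
        · exact ⟨k + j, Or.inl (by rw [hk, hj, zpow_add])⟩
        · exact ⟨k + j, Or.inr (by rw [hk, hj, zpow_add, mul_assoc])⟩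
        · refine ⟨k + -j, Or.inr ?_⟩
          rw [hk, hj, zpow_add, mul_assoc, mul_assoc, ← key j]
        · refine ⟨k + -j, Or.inl ?_⟩
          rw [hk, hj, zpow_add, ← mul_assoc, mul_assoc (r ^ k), key j, ← mul_assoc,
            mul_assoc, h₁, mul_one]
    | inv x hx ihx =>
        obtain ⟨k, hk⟩ := ihx
        rcases hk with hk | hk
        · exact ⟨-k, Or.inl (by rw [hk, ← zpow_neg])⟩
        · refine ⟨k, Or.inr ?_⟩
          rw [hk, mul_inv_rev, hs₁inv, ← inv_zpow, inv_zpow', key (-k), neg_neg]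
  -- description of the orbit
  have hOmem : ∀ x, x ∈ O ↔ ∃ k : ℤ, x = (r ^ k) w₀ ∨ x = (r ^ k) (s₁ w₀) := by
    intro x
    rw [hO]
    constructor
    · rintro ⟨⟨g, hg⟩, rfl⟩
      obtain ⟨k, hk | hk⟩ := struct g hg
      · exact ⟨k, Or.inl (by simp [hk, Equiv.Perm.smul_def])⟩
      · exact ⟨k, Or.inr (by simp [hk, Equiv.Perm.smul_def, Equiv.Perm.mul_apply])⟩
    · rintro ⟨k, hk | hk⟩
      · exact ⟨⟨r ^ k, hrH k⟩, hk.symm⟩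
      · refine ⟨⟨r ^ k * s₁, mul_mem (hrH k) hs₁H⟩, ?_⟩
        simp [hk, Equiv.Perm.smul_def, Equiv.Perm.mul_apply]
  have hrkO : ∀ k : ℤ, (r ^ k) w₀ ∈ O := fun k => (hOmem _).2 ⟨k, Or.inl rfl⟩
  -- applying s₁ to a power of r at w₀
  have happ : ∀ k : ℤ, s₁ ((r ^ k) w₀) = (r ^ (-k)) (s₁ w₀) := by
    intro k
    rw [← Equiv.Perm.mul_apply, key k, Equiv.Perm.mul_apply]
  have happ' : ∀ k : ℤ, s₁ ((r ^ k) (s₁ w₀)) = (r ^ (-k)) w₀ := by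
    intro k
    have hc : s₁ * r ^ k * s₁ = r ^ (-k) := by
      rw [key k, mul_assoc, h₁, mul_one]
    calc s₁ ((r ^ k) (s₁ w₀)) = (s₁ * r ^ k * s₁) w₀ := by
          simp [Equiv.Perm.mul_apply]
      _ = (r ^ (-k)) w₀ := by rw [hc]
  -- the two "rows" are disjoint
  have hdisj : ∀ m : ℤ, s₁ w₀ ≠ (r ^ m) w₀ := by
    intro m hm
    rcases Int.even_or_odd m with ⟨n, hn⟩ | ⟨n, hn⟩
    · -- s₁ fixes (r ^ n) w₀
      refine (hnofix _ (hrkO n)).1 ?_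
      rw [happ n, hm, comb]
      have he : -n + m = n := by omega
      rw [he]
    · -- s₂ fixes (r ^ (n+1)) w₀
      refine (hnofix _ (hrkO (n + 1))).2 ?_
      have hs₂r : s₂ = r * s₁ := by rw [hr, mul_assoc, h₁, mul_one]
      have hc := comb 1 (-(n + 1) + m) w₀
      rw [zpow_one] at hc
      rw [hs₂r, Equiv.Perm.mul_apply, happ (n + 1), hm, comb, hc]
      have he : 1 + (-(n + 1) + m) = n + 1 := by omega
      rw [he]
  -- points fixed under integer powers
  have fixzpow : ∀ (g : Equiv.Perm Y) (x : Y), g x = x → ∀ k : ℤ, (g ^ k) x = x := by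
    intro g x hg k
    have hg' : g ∈ MulAction.stabilizer (Equiv.Perm Y) x := hg
    exact zpow_mem hg' k
  -- main computation, for a given minimal period p
  have main : ∀ p : ℕ, 0 < p → ((s₂ * s₁) ^ p) w₀ = w₀ →
      (∀ q : ℕ, 0 < q → ((s₂ * s₁) ^ q) w₀ = w₀ → p ≤ q) →
      O.ncard = 2 * p := by
    intro p hp hfix hmin
    rw [← hr] at hfix hmin
    have hperiod : ∀ k : ℤ, (r ^ k) w₀ = w₀ ↔ (p : ℤ) ∣ k := by
      intro k
      constructor
      · intro hk
        have hmod : (r ^ (k % (p : ℤ))) w₀ = w₀ := by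
          have hq : (r ^ ((p : ℤ) * (k / (p : ℤ)))) w₀ = w₀ := by
            rw [zpow_mul, zpow_natCast]
            exact fixzpow _ _ hfix _
          have hcomb := comb (k % (p : ℤ)) ((p : ℤ) * (k / (p : ℤ))) w₀
          rw [hq] at hcomb
          have he : k % (p : ℤ) + (p : ℤ) * (k / (p : ℤ)) = k := by
            rw [Int.emod_def]; ring
          rw [hcomb, he]
          exact hk
        set s := (k % (p : ℤ)).toNat with hs
        have hs0 : (s : ℤ) = k % (p : ℤ) :=
          Int.toNat_of_nonneg (Int.emod_nonneg k (by exact_mod_cast hp.ne'))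
        have hslt : s < p := by
          have := Int.emod_lt_of_pos k (show (0:ℤ) < p by exact_mod_cast hp)
          omega
        rcases Nat.eq_zero_or_pos s with h0 | hpos
        · have : k % (p : ℤ) = 0 := by omega
          exact Int.dvd_of_emod_eq_zero this
        · exfalso
          have : (r ^ s) w₀ = w₀ := by
            rw [← zpow_natCast, hs0]; exact hmod
          exact absurd (hmin s hpos this) (by omega)
      · rintro ⟨t, rfl⟩
        rw [zpow_mul, zpow_natCast]
        exact fixzpow _ _ hfix _
    -- the counting map
    set f : Fin p ⊕ Fin p → Y := fun x =>
      Sum.rec (fun i => (r ^ (i : ℕ)) w₀) (fun i => (r ^ (i : ℕ)) (s₁ w₀)) x with hf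
    have hne : ∀ i j : ℤ, (r ^ i) w₀ ≠ (r ^ j) (s₁ w₀) := by
      intro i j h
      apply hdisj (-j + i)
      have h2 : (r ^ (-j)) ((r ^ i) w₀) = (r ^ (-j)) ((r ^ j) (s₁ w₀)) := by rw [h]
      rw [comb, comb, neg_add_cancel, zpow_zero] at h2
      simpa using h2.symm
    have heqiff : ∀ i j : ℤ, (r ^ i) w₀ = (r ^ j) w₀ ↔ (p : ℤ) ∣ i - j := by
      intro i j
      rw [← hperiod (i - j)]
      constructor
      · intro h
        have h2 : (r ^ (-j)) ((r ^ i) w₀) = (r ^ (-j)) ((r ^ j) w₀) := by rw [h]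
        rw [comb, comb, neg_add_cancel, zpow_zero] at h2
        rw [show i - j = -j + i by ring]
        simpa using h2
      · intro h
        have h2 := comb j (i - j) w₀
        rw [h] at h2
        rw [show i = j + (i - j) by ring]
        exact h2.symm
    have heqiff' : ∀ i j : ℤ, (r ^ i) (s₁ w₀) = (r ^ j) (s₁ w₀) ↔ (p : ℤ) ∣ i - j := by
      intro i j
      constructor
      · intro h
        have h2 : s₁ ((r ^ i) (s₁ w₀)) = s₁ ((r ^ j) (s₁ w₀)) := by rw [h]
        rw [happ' i, happ' j] at h2
        have h3 := (heqiff (-i) (-j)).1 h2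
        rw [show -i - -j = -(i - j) by ring, dvd_neg] at h3
        exact h3
      · intro h
        have hfixd : (r ^ (i - j)) (s₁ w₀) = s₁ w₀ := by
          apply s₁.injective
          rw [happ' (i - j), (hperiod (-(i - j))).2 (dvd_neg.mpr h),
            ← Equiv.Perm.mul_apply, h₁]
          simp
        have h2 := comb j (i - j) (s₁ w₀)
        rw [hfixd] at h2
        rw [show i = j + (i - j) by ring]
        exact h2.symm
    have hinj : Function.Injective f := by
      have hsmall : ∀ a b : Fin p, (p : ℤ) ∣ (a : ℤ) - (b : ℤ) → a = b := by
        intro a b hd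
        have := Int.eq_zero_of_dvd_of_natAbs_lt_natAbs hd
          (by
            have ha := a.isLt
            have hb := b.isLt
            have : ((a : ℤ) - b).natAbs < p := by omega
            simpa using this)
        ext
        omega
      rintro (a | a) (b | b) hab <;> simp only [hf] at hab
      · have : (r ^ ((a : ℕ) : ℤ)) w₀ = (r ^ ((b : ℕ) : ℤ)) w₀ := by
          rw [zpow_natCast, zpow_natCast]; exact hab
        exact congrArg Sum.inl (hsmall a b ((heqiff _ _).1 this))
      · refine absurd ?_ (hne ((a : ℕ) : ℤ) ((b : ℕ) : ℤ))
        rw [zpow_natCast, zpow_natCast]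
        exact hab
      · refine absurd ?_ (hne ((b : ℕ) : ℤ) ((a : ℕ) : ℤ))
        rw [zpow_natCast, zpow_natCast]
        exact hab.symm
      · have : (r ^ ((a : ℕ) : ℤ)) (s₁ w₀) = (r ^ ((b : ℕ) : ℤ)) (s₁ w₀) := by
          rw [zpow_natCast, zpow_natCast]; exact hab
        exact congrArg Sum.inr (hsmall a b ((heqiff' _ _).1 this))
    have hrange : Set.range f = O := by
      ext x
      constructor
      · rintro ⟨(a | a), rfl⟩
        · exact (hOmem _).2 ⟨(a : ℕ), Or.inl (by rw [zpow_natCast])⟩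
        · exact (hOmem _).2 ⟨(a : ℕ), Or.inr (by rw [zpow_natCast])⟩
      · intro hx
        obtain ⟨k, hk | hk⟩ := (hOmem x).1 hx
        · have h0 : 0 ≤ k % (p : ℤ) := Int.emod_nonneg k (by exact_mod_cast hp.ne')
          have hlt : k % (p : ℤ) < p := Int.emod_lt_of_pos k (by exact_mod_cast hp)
          refine ⟨Sum.inl ⟨(k % (p : ℤ)).toNat, by omega⟩, ?_⟩
          simp only [hf]
          rw [hk, ← zpow_natCast r, Int.toNat_of_nonneg h0]
          exact (heqiff _ _).2 ⟨-(k / (p : ℤ)), by rw [Int.emod_def]; ring⟩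
        · have h0 : 0 ≤ k % (p : ℤ) := Int.emod_nonneg k (by exact_mod_cast hp.ne')
          have hlt : k % (p : ℤ) < p := Int.emod_lt_of_pos k (by exact_mod_cast hp)
          refine ⟨Sum.inr ⟨(k % (p : ℤ)).toNat, by omega⟩, ?_⟩
          simp only [hf]
          rw [hk, ← zpow_natCast r, Int.toNat_of_nonneg h0]
          exact (heqiff' _ _).2 ⟨-(k / (p : ℤ)), by rw [Int.emod_def]; ring⟩
    calc O.ncard = Nat.card O := (Nat.card_coe_set_eq O).symm
      _ = Nat.card (Set.range f) := by rw [hrange]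
      _ = Nat.card (Fin p ⊕ Fin p) := Nat.card_range_of_injective hinj
      _ = 2 * p := by simp [Nat.card_eq_fintype_card]; omega
  -- existence of a minimal period
  have hex : ∃ n : ℕ, 0 < n ∧ (r ^ n) w₀ = w₀ := by
    have hmaps : Set.MapsTo (fun n : ℕ => (r ^ n) w₀) Set.univ O := by
      intro n _
      have := hrkO (n : ℤ)
      rwa [zpow_natCast] at this
    obtain ⟨a, -, b, -, hab, heq⟩ :=
      Set.infinite_univ.exists_ne_map_eq_of_mapsTo hmaps hfin
    have step : ∀ a b : ℕ, a < b → (r ^ (b : ℤ)) w₀ = (r ^ (a : ℤ)) w₀ →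
        (r ^ (b - a)) w₀ = w₀ := by
      intro a b hlt h
      have h2 : (r ^ (-(a : ℤ))) ((r ^ (b : ℤ)) w₀) = (r ^ (-(a : ℤ))) ((r ^ (a : ℤ)) w₀) := by
        rw [h]
      rw [comb, comb, neg_add_cancel, zpow_zero] at h2
      have h3 : ((b - a : ℕ) : ℤ) = -(a : ℤ) + b := by omega
      rw [← zpow_natCast r (b - a), h3]
      simpa using h2
    have ha : (r ^ ((a : ℕ) : ℤ)) w₀ = (r ^ ((b : ℕ) : ℤ)) w₀ := by
      rw [zpow_natCast, zpow_natCast]; exact heq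
    rcases lt_or_gt_of_ne hab with h | h
    · exact ⟨b - a, by omega, step a b h ha.symm⟩
    · exact ⟨a - b, by omega, step b a h ha⟩
  constructor
  · obtain ⟨n, hn, hfixn⟩ := hex
    classical
    have hfind := Nat.find_spec (⟨n, hn, hfixn⟩ : ∃ m : ℕ, 0 < m ∧ (r ^ m) w₀ = w₀)
    set p₀ := Nat.find (⟨n, hn, hfixn⟩ : ∃ m : ℕ, 0 < m ∧ (r ^ m) w₀ = w₀) with hp₀
    have hmin : ∀ q : ℕ, 0 < q → ((s₂ * s₁) ^ q) w₀ = w₀ → p₀ ≤ q := by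
      intro q hq hfq
      exact Nat.find_le ⟨hq, by rw [← hr] at hfq; exact hfq⟩
    have := main p₀ hfind.1 (by rw [← hr]; exact hfind.2) hmin
    exact ⟨p₀, by omega⟩
  · exact main
end

section
/- Let 𝒰 be the free commutative monoid on u₁,…,uₙ and let φ : 𝒰 → Sym(n) be a map satisfying the cocycle identity φ(bc) = φ(φ(c)(b)) ∘ φ(c) for all b, c ∈ 𝒰, where Sym(n) acts on 𝒰 by permuting the generators. Then P = {a ∈ 𝒰 : φ(a) = id} is a saturated submonoid of 𝒰: if a ∈ P, then ab ∈ P if and only if b ∈ P. -/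
/-- The action of a permutation on the free commutative monoid `ℕⁿ`
(permuting the generators). -/
def permAct {n : ℕ} (σ : Equiv.Perm (Fin n)) (a : Fin n → ℕ) : Fin n → ℕ :=
  fun i => a (σ⁻¹ i)

theorem kernel_saturated {n : ℕ} (φ : (Fin n → ℕ) → Equiv.Perm (Fin n))
    (hcoc : ∀ b c : Fin n → ℕ, φ (b + c) = φ (permAct (φ c) b) * φ c) :
    φ 0 = 1 ∧
    (∀ a b : Fin n → ℕ, φ a = 1 → φ b = 1 → φ (a + b) = 1) ∧
    (∀ a b : Fin n → ℕ, φ a = 1 → (φ (a + b) = 1 ↔ φ b = 1)) := by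
  have hact1 : ∀ a : Fin n → ℕ, permAct 1 a = a := by
    intro a; funext i; simp [permAct]
  have key : ∀ a b : Fin n → ℕ, φ a = 1 → φ (a + b) = φ b := by
    intro a b ha
    have := hcoc b a
    rw [ha, hact1, mul_one] at this
    rw [add_comm] at this
    exact this
  have h0 : φ 0 = 1 := by
    have := hcoc 0 0
    have h00 : permAct (φ 0) 0 = 0 := by funext i; simp [permAct]
    rw [h00, add_zero] at this
    exact (mul_left_cancel (a := φ 0) (by rw [← this, mul_one])).symm
  refine ⟨h0, ?_, ?_⟩
  · intro a b ha hb; rw [key a b ha, hb]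
  · intro a b ha; rw [key a b ha]
end

section
/- Let 𝒰 be the free commutative monoid on u₁,…,uₙ and φ : 𝒰 → Sym(n) a map with φ(1) = id satisfying the cocycle identity φ(bc) = φ(φ(c)(b)) ∘ φ(c). Then for every i ∈ {1,…,n} there exists a positive integer t_i such that φ(u_i^{t_i}) = id. -/
lemma permAct_one {n : ℕ} (a : Fin n → ℕ) : permAct 1 a = a := rfl

lemma permAct_single {n : ℕ} (σ : Equiv.Perm (Fin n)) (j : Fin n) (m : ℕ) :
    permAct σ (Pi.single j m) = Pi.single (σ j) m := by
  funext x
  simp only [permAct, Pi.single_apply]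
  congr 1
  rw [eq_iff_iff]
  constructor
  · rintro rfl; simp
  · rintro rfl; simp

theorem exists_power_in_kernel {n : ℕ} (φ : (Fin n → ℕ) → Equiv.Perm (Fin n))
    (h0 : φ 0 = 1)
    (hcoc : ∀ b c : Fin n → ℕ, φ (b + c) = φ (permAct (φ c) b) * φ c) :
    ∀ i : Fin n, ∃ t : ℕ, 0 < t ∧ φ (Pi.single i t) = 1 := by
  intro i
  obtain ⟨k, l, hne, heq⟩ := Finite.exists_ne_map_eq_of_infinite
    (fun k : ℕ => φ (Pi.single i k))
  -- wlog k < l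
  obtain ⟨k, l, hkl, heq⟩ : ∃ k l : ℕ, k < l ∧ φ (Pi.single i k) = φ (Pi.single i l) := by
    rcases hne.lt_or_gt with h | h
    · exact ⟨k, l, h, heq⟩
    · exact ⟨l, k, h, heq.symm⟩
  set σ : Equiv.Perm (Fin n) := φ (Pi.single i k) with hσ
  set t : ℕ := l - k with ht
  have htpos : 0 < t := Nat.sub_pos_of_lt hkl
  have hsingle : (Pi.single i l : Fin n → ℕ) = Pi.single i t + Pi.single i k := by
    rw [← Pi.single_add, Nat.sub_add_cancel hkl.le]
  -- φ (single (σ i) t) = 1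
  have key : φ (Pi.single (σ i) t) = 1 := by
    have h1 : φ (Pi.single i l) = φ (Pi.single (σ i) t) * σ := by
      rw [hsingle, hcoc, permAct_single]
    have h2 : φ (Pi.single (σ i) t) * σ = 1 * σ := by
      rw [one_mul, ← h1, ← heq]
    exact mul_right_cancel h2
  -- closure under σ
  have step : ∀ j : Fin n, φ (Pi.single j t) = 1 → φ (Pi.single (σ j) t) = 1 := by
    intro j hj
    have h1 : φ (Pi.single j t + Pi.single i k) = φ (Pi.single (σ j) t) * σ := by
      rw [hcoc, permAct_single]
    have h2 : φ (Pi.single j t + Pi.single i k) = σ := by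
      rw [add_comm, hcoc, hj, permAct_one, mul_one]
    have h3 : φ (Pi.single (σ j) t) * σ = 1 * σ := by
      rw [one_mul, ← h1, h2]
    exact mul_right_cancel h3
  have iter : ∀ m : ℕ, φ (Pi.single ((σ ^ m) (σ i)) t) = 1 := by
    intro m
    induction m with
    | zero => simpa using key
    | succ m ih =>
        have : (σ ^ (m + 1)) (σ i) = σ ((σ ^ m) (σ i)) := by
          rw [pow_succ']
          rfl
        rw [this]
        exact step _ ih
  -- choose m so that (σ ^ m) (σ i) = i
  have hM : σ ^ orderOf σ = 1 := pow_orderOf_eq_one σ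
  have hMpos : 0 < orderOf σ := orderOf_pos σ
  have hback : (σ ^ (orderOf σ - 1)) (σ i) = i := by
    have : (σ ^ (orderOf σ - 1)) * σ = σ ^ orderOf σ := by
      rw [← pow_succ]
      congr 1
      omega
    calc (σ ^ (orderOf σ - 1)) (σ i) = ((σ ^ (orderOf σ - 1)) * σ) i := rfl
      _ = (σ ^ orderOf σ) i := by rw [this]
      _ = i := by rw [hM]; rfl
  refine ⟨t, htpos, ?_⟩
  have := iter (orderOf σ - 1)
  rwa [hback] at this
end

section
/- Let S be a monoid generated by X = {x₁,…,xₙ} which is of I-type, i.e., there is a bijection v : ℕⁿ → S with v(0) = 1 and, for all a ∈ ℕⁿ, {v(a + e₁),…, v(a + eₙ)} = {x₁ v(a),…, xₙ v(a)} (where e_i are the standard basis vectors). Then S is right cancellative: if s x = t x in S then s = t. -/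
/-! Let `L d` be the finite set of exponent vectors of total degree `d`. For fixed `a`, the
I-structure gives `v '' L d * {v a} = v '' ({a} + L d)` by induction on `d`: passing from degree
`d` to `d + 1` multiplies both sides on the left by the generators. So right multiplication by
`v a` maps `v '' L d` onto a set of the same finite size, hence injectively. It also preserves
degree: `v b * v a = v (a + c)` for some `c` of the degree of `b`, and `v` is injective. -/

open Pointwise Finset.Nat

theorem coe_antidiagonalTuple_succ (n d : ℕ) :
    (antidiagonalTuple n (d + 1) : Set (Fin n → ℕ)) =
      (antidiagonalTuple n d : Set (Fin n → ℕ)) + Set.range fun i => Pi.single i 1 := by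
  ext c
  simp only [Finset.mem_coe, mem_antidiagonalTuple, Set.mem_add, Set.mem_range]
  constructor
  · intro hc
    obtain ⟨k, hk⟩ : ∃ k, c k ≠ 0 := by
      by_contra! h
      simp [h] at hc
    have hck : c - Pi.single k 1 + Pi.single k 1 = c := by
      funext i
      rcases eq_or_ne i k with rfl | hi <;> simp [*]
      omega
    refine ⟨c - Pi.single k 1, ?_, _, ⟨k, rfl⟩, hck⟩
    have hsum := congrArg (fun c : Fin n → ℕ => ∑ i, c i) hck
    simp only [Pi.add_apply, Finset.sum_add_distrib, Finset.sum_pi_single', Finset.mem_univ,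
      if_true] at hsum
    omega
  · rintro ⟨b, hb, _, ⟨i, rfl⟩, rfl⟩
    simp [Finset.sum_add_distrib, hb]

section

variable {n : ℕ} {S : Type*}

def IsLeftIStructure [Mul S] (x : Fin n → S) (v : (Fin n → ℕ) → S) : Prop :=
  ∀ a : Fin n → ℕ, Set.range (fun i => v (a + Pi.single i 1)) = Set.range (fun i => x i * v a)

theorem IsLeftIStructure.image_add_range_single [Mul S] {x : Fin n → S}
    {v : (Fin n → ℕ) → S} (hI : IsLeftIStructure x v) (A : Set (Fin n → ℕ)) :
    v '' (A + Set.range fun i => Pi.single i 1) = Set.range x * v '' A := by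
  ext s
  simp only [Set.mem_image, Set.mem_add, Set.mem_mul, Set.mem_range]
  constructor
  · rintro ⟨_, ⟨a, ha, _, ⟨i, rfl⟩, rfl⟩, rfl⟩
    obtain ⟨j, hj⟩ : v (a + Pi.single i 1) ∈ Set.range fun i => x i * v a :=
      hI a ▸ ⟨i, rfl⟩
    exact ⟨_, ⟨j, rfl⟩, _, ⟨a, ha, rfl⟩, hj⟩
  · rintro ⟨_, ⟨j, rfl⟩, _, ⟨a, ha, rfl⟩, rfl⟩
    obtain ⟨i, hi⟩ : x j * v a ∈ Set.range fun i => v (a + Pi.single i 1) :=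
      (hI a).symm ▸ ⟨j, rfl⟩
    exact ⟨_, ⟨a, ha, _, ⟨i, rfl⟩, rfl⟩, hi⟩

variable [Monoid S] {x : Fin n → S} {v : (Fin n → ℕ) → S}

theorem IsLeftIStructure.image_antidiagonalTuple_mul_singleton
    (hI : IsLeftIStructure x v) (hone : v 0 = 1) (a : Fin n → ℕ) (d : ℕ) :
    v '' ↑(antidiagonalTuple n d) * {v a} = v '' ({a} + ↑(antidiagonalTuple n d)) := by
  induction d with
  | zero => simp [antidiagonalTuple_zero_right, hone]
  | succ d ih =>
    rw [coe_antidiagonalTuple_succ, hI.image_add_range_single, mul_assoc, ih, ← add_assoc,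
      hI.image_add_range_single]

theorem IsLeftIStructure.exists_mul_eq_add
    (hI : IsLeftIStructure x v) (hone : v 0 = 1) (b a : Fin n → ℕ) :
    ∃ c, ∑ i, c i = ∑ i, b i ∧ v b * v a = v (a + c) := by
  have hb : v b * v a ∈ v '' ↑(antidiagonalTuple n (∑ i, b i)) * {v a} :=
    Set.mul_mem_mul ⟨b, mem_antidiagonalTuple.2 rfl, rfl⟩ rfl
  rw [hI.image_antidiagonalTuple_mul_singleton hone, Set.singleton_add, Set.image_image] at hb
  obtain ⟨c, hc, hbc⟩ := hb
  exact ⟨c, mem_antidiagonalTuple.1 hc, hbc.symm⟩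

theorem IsLeftIStructure.injOn_mul_right_antidiagonalTuple
    (hI : IsLeftIStructure x v) (hone : v 0 = 1) (hv : Function.Injective v)
    (a : Fin n → ℕ) (d : ℕ) :
    Set.InjOn (fun b => v b * v a) (antidiagonalTuple n d) := by
  refine Set.injOn_of_ncard_image_eq ?_
  rw [← Set.image_image (· * v a) v, ← Set.mul_singleton,
    hI.image_antidiagonalTuple_mul_singleton hone, Set.singleton_add, Set.image_image]
  exact Set.ncard_image_of_injective _ (hv.comp (add_right_injective a))

end

theorem I_type_right_cancellative_general {n : ℕ} {S : Type*} [Monoid S]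
    (x : Fin n → S)
    (v : (Fin n → ℕ) → S) (hbij : Function.Bijective v) (hone : v 0 = 1)
    (hI : ∀ a : Fin n → ℕ,
      Set.range (fun i => v (a + Pi.single i 1)) =
        Set.range (fun i => x i * v a)) :
    ∀ s t u : S, s * u = t * u → s = t := by
  replace hI : IsLeftIStructure x v := hI
  intro s t u h
  obtain ⟨a, rfl⟩ := hbij.2 u
  obtain ⟨b, rfl⟩ := hbij.2 s
  obtain ⟨b', rfl⟩ := hbij.2 t
  obtain ⟨c, hc, hbc⟩ := hI.exists_mul_eq_add hone b a
  obtain ⟨c', hc', hbc'⟩ := hI.exists_mul_eq_add hone b' a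
  have hcc : c = c' := add_left_cancel (hbij.1 (hbc.symm.trans (h.trans hbc')))
  have hb' : b' ∈ antidiagonalTuple n (∑ i, b i) := by
    rw [mem_antidiagonalTuple, ← hc', ← hcc, hc]
  exact congrArg v (hI.injOn_mul_right_antidiagonalTuple hone hbij.1 a _
    (mem_antidiagonalTuple.2 rfl) hb' h)

theorem I_type_right_cancellative {n : ℕ} {S : Type*} [Monoid S]
    (x : Fin n → S) (hgen : Submonoid.closure (Set.range x) = ⊤)
    (v : (Fin n → ℕ) → S) (hbij : Function.Bijective v) (hone : v 0 = 1)
    (hI : ∀ a : Fin n → ℕ,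
      Set.range (fun i => v (a + Pi.single i 1)) =
        Set.range (fun i => x i * v a)) :
    ∀ s t u : S, s * u = t * u → s = t :=
  I_type_right_cancellative_general x v hbij hone hI
end

section
/- Let S be a monoid of I-type with I-structure v : ℕⁿ → S, and let w : ℕⁿ → S be any other bijection with w(0) = 1 satisfying the I-structure condition {w(a+e_i) : i} = {x_i w(a) : i} for all a. Then there exists a permutation σ ∈ Sym(n) such that w = v ∘ σ, where σ acts on ℕⁿ by permuting coordinates. -/
theorem I_structure_unique_up_to_perm {n : ℕ} {S : Type*} [Monoid S]
    (x : Fin n → S) (hgen : Submonoid.closure (Set.range x) = ⊤)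
    (v : (Fin n → ℕ) → S) (hv : Function.Bijective v) (hv0 : v 0 = 1)
    (hvI : ∀ a : Fin n → ℕ,
      Set.range (fun i => v (a + Pi.single i 1)) =
        Set.range (fun i => x i * v a))
    (w : (Fin n → ℕ) → S) (hw : Function.Bijective w) (hw0 : w 0 = 1)
    (hwI : ∀ a : Fin n → ℕ,
      Set.range (fun i => w (a + Pi.single i 1)) =
        Set.range (fun i => x i * w a)) :
    ∃ σ : Equiv.Perm (Fin n), ∀ a : Fin n → ℕ,
      w a = v (fun i => a (σ⁻¹ i)) := by
  classical
  obtain ⟨φ, hvφ⟩ : ∃ φ : (Fin n → ℕ) → (Fin n → ℕ), ∀ a, v (φ a) = w a := by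
    choose φ hφ using fun a => hv.2 (w a)
    exact ⟨φ, hφ⟩
  have hφinj : Function.Injective φ := fun a b h => hw.1 (by rw [← hvφ, ← hvφ, h])
  have hφsurj : Function.Surjective φ := by
    intro c
    obtain ⟨a, ha⟩ := hw.2 (v c)
    exact ⟨a, hv.1 (by rw [hvφ, ha])⟩
  have hφ0 : φ 0 = 0 := hv.1 (by rw [hvφ, hw0, hv0])
  have edge : ∀ (a : Fin n → ℕ) (i : Fin n),
      ∃ j, φ (a + Pi.single i 1) = φ a + Pi.single j 1 := by
    intro a i
    have h1 : w (a + Pi.single i 1) ∈ Set.range (fun i => x i * w a) := by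
      rw [← hwI a]; exact ⟨i, rfl⟩
    obtain ⟨j, hj⟩ := h1
    have h2 : x j * w a ∈ Set.range (fun i => v (φ a + Pi.single i 1)) := by
      rw [hvI (φ a), hvφ a]; exact ⟨j, rfl⟩
    obtain ⟨l, hl⟩ := h2
    exact ⟨l, hv.1 (by rw [hvφ, ← hj]; exact hl.symm)⟩
  have ssum : ∀ (i : Fin n) (m : ℕ), ∑ l, (Pi.single i m : Fin n → ℕ) l = m := by
    intro i m
    simp [Pi.single_apply]
  have sadd : ∀ (a b : Fin n → ℕ), ∑ l, (a + b) l = (∑ l, a l) + ∑ l, b l :=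
    fun a b => Finset.sum_add_distrib
  have upd : ∀ (a : Fin n → ℕ) (i : Fin n), 0 < a i →
      a = Function.update a i (a i - 1) + Pi.single i 1 := by
    intro a i h
    funext l
    by_cases hl : l = i
    · subst hl
      simp only [Pi.add_apply, Function.update_self, Pi.single_eq_same]
      omega
    · simp only [Pi.add_apply, Function.update_of_ne hl, Pi.single_eq_of_ne hl, add_zero]
  have hsum : ∀ a : Fin n → ℕ, ∑ l, φ a l = ∑ l, a l := by
    intro a
    induction' hk : (∑ l, a l) with k IH generalizing a
    · have ha0 : a = 0 := by
        funext l
        exact Finset.sum_eq_zero_iff.mp hk l (Finset.mem_univ l)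
      rw [ha0, hφ0]
      simp
    · obtain ⟨i, -, hi0⟩ := Finset.exists_ne_zero_of_sum_ne_zero
        (show (∑ l, a l) ≠ 0 by rw [hk]; exact k.succ_ne_zero)
      have hi : 0 < a i := Nat.pos_of_ne_zero hi0
      have hab := upd a i hi
      set b := Function.update a i (a i - 1) with hbdef
      have hbs : ∑ l, b l = k := by
        have h1 := sadd b (Pi.single i 1)
        rw [← hab, ssum, hk] at h1
        omega
      obtain ⟨j, hj⟩ := edge b i
      rw [← hab] at hj
      rw [hj, sadd, ssum, IH b hbs]
  -- the permutation coming from level 1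
  have hf : ∀ i : Fin n, ∃ j, φ (Pi.single i 1) = Pi.single j 1 := by
    intro i
    obtain ⟨j, hj⟩ := edge 0 i
    rw [zero_add, hφ0, zero_add] at hj
    exact ⟨j, hj⟩
  choose f hfspec using hf
  have finj : Function.Injective f := by
    intro p q hpq
    have h1 : φ (Pi.single p 1) = φ (Pi.single q 1) := by
      rw [hfspec, hfspec, hpq]
    have h2 := hφinj h1
    have h3 := congrFun h2 p
    rw [Pi.single_eq_same, Pi.single_apply] at h3
    by_contra hne
    rw [if_neg hne] at h3
    exact one_ne_zero h3
  obtain ⟨τ, hτf⟩ : ∃ τ : Equiv.Perm (Fin n), ∀ p, τ p = f p :=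
    ⟨Equiv.ofBijective f (Finite.injective_iff_bijective.mp finj), fun p => rfl⟩
  have hfspec' : ∀ i, φ (Pi.single i 1) = Pi.single (τ i) 1 := by
    intro i; rw [hτf]; exact hfspec i
  have main : ∀ (k : ℕ) (a : Fin n → ℕ), (∑ l, a l) = k →
      φ a = fun l => a (τ.symm l) := by
    intro k
    induction k with
    | zero =>
      intro a ha
      have ha0 : a = 0 := by
        funext l
        exact Finset.sum_eq_zero_iff.mp ha l (Finset.mem_univ l)
      rw [ha0, hφ0]
      rfl
    | succ k IH =>
      intro a ha
      -- Case A : two distinct positive coordinates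
      have caseA : ∀ (c : Fin n → ℕ), (∑ l, c l) = k + 1 → ∀ p q, p ≠ q →
          0 < c p → 0 < c q → φ c = fun l => c (τ.symm l) := by
        intro c hc p q hpq hp hq
        have hbp := upd c p hp
        have hbq := upd c q hq
        set b1 := Function.update c p (c p - 1) with hb1
        set b2 := Function.update c q (c q - 1) with hb2
        have hs1 : ∑ l, b1 l = k := by
          have h1 := sadd b1 (Pi.single p 1)
          rw [← hbp, ssum, hc] at h1
          omega
        have hs2 : ∑ l, b2 l = k := by
          have h1 := sadd b2 (Pi.single q 1)
          rw [← hbq, ssum, hc] at h1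
          omega
        obtain ⟨j1, hj1⟩ := edge b1 p
        obtain ⟨j2, hj2⟩ := edge b2 q
        rw [← hbp, IH b1 hs1] at hj1
        rw [← hbq, IH b2 hs2] at hj2
        have hb1p : b1 p = c p - 1 := by rw [hb1, Function.update_self]
        have hb2p : b2 p = c p := by rw [hb2, Function.update_of_ne hpq]
        have hj1τ : j1 = τ p := by
          by_contra hne
          have heval := congrFun (hj1.symm.trans hj2) (τ p)
          simp only [Pi.add_apply, Equiv.symm_apply_apply, hb1p, hb2p,
            Pi.single_apply] at heval
          rw [if_neg (fun hh => hne hh.symm)] at heval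
          split_ifs at heval <;> omega
        subst hj1τ
        funext l
        rw [congrFun hj1 l]
        simp only [Pi.add_apply, hb1, Function.update_apply, Pi.single_apply]
        by_cases hl : τ.symm l = p
        · have hl2 : l = τ p := by rw [← hl, Equiv.apply_symm_apply]
          rw [if_pos hl, if_pos hl2, hl]
          omega
        · have hl2 : l ≠ τ p := fun h => hl (by rw [h, Equiv.symm_apply_apply])
          rw [if_neg hl, if_neg hl2, add_zero]
      by_cases hmc : ∃ p q, p ≠ q ∧ 0 < a p ∧ 0 < a q
      · obtain ⟨p, q, hpq, hp, hq⟩ := hmc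
        exact caseA a ha p q hpq hp hq
      · push_neg at hmc
        obtain ⟨i, -, hi0⟩ := Finset.exists_ne_zero_of_sum_ne_zero
          (show (∑ l, a l) ≠ 0 by rw [ha]; exact k.succ_ne_zero)
        have hi : 0 < a i := Nat.pos_of_ne_zero hi0
        have hzero : ∀ l, l ≠ i → a l = 0 := fun l hl =>
          Nat.le_zero.mp (hmc i l (fun h => hl h.symm) hi)
        have hai : a i = k + 1 := by
          rw [← ha]
          exact (Finset.sum_eq_single_of_mem i (Finset.mem_univ i)
            (fun l _ hl => hzero l hl)).symm
        have hsingle : a = Pi.single i (k + 1) := by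
          funext l
          by_cases hl : l = i
          · subst hl; rw [Pi.single_eq_same, hai]
          · rw [Pi.single_eq_of_ne hl, hzero l hl]
        rcases Nat.eq_zero_or_pos k with hk0 | hkpos
        · subst hk0
          rw [hsingle, hfspec' i]
          funext l
          by_cases hl : τ.symm l = i
          · have hl2 : l = τ i := by rw [← hl, Equiv.apply_symm_apply]
            rw [hl, hl2, Pi.single_eq_same, Pi.single_eq_same]
          · have hl2 : l ≠ τ i := fun h => hl (by rw [h, Equiv.symm_apply_apply])
            rw [Pi.single_eq_of_ne hl2, Pi.single_eq_of_ne hl]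
        · obtain ⟨c, hc⟩ := hφsurj (Pi.single (τ i) (k + 1))
          have hcs : ∑ l, c l = k + 1 := by rw [← hsum c, hc, ssum]
          have hcsingle : c = Pi.single i (k + 1) := by
            by_cases hmc2 : ∃ p q, p ≠ q ∧ 0 < c p ∧ 0 < c q
            · exfalso
              obtain ⟨p, q, hpq, hp, hq⟩ := hmc2
              have hφc := caseA c hcs p q hpq hp hq
              rw [hφc] at hc
              have h1 := congrFun hc (τ p)
              have h2 := congrFun hc (τ q)
              simp only [Equiv.symm_apply_apply, Pi.single_apply] at h1 h2
              have hp' : τ p = τ i := by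
                by_contra h; rw [if_neg h] at h1; omega
              have hq' : τ q = τ i := by
                by_contra h; rw [if_neg h] at h2; omega
              exact hpq (τ.injective (hp'.trans hq'.symm))
            · push_neg at hmc2
              obtain ⟨p, -, hp0⟩ := Finset.exists_ne_zero_of_sum_ne_zero
                (show (∑ l, c l) ≠ 0 by rw [hcs]; exact k.succ_ne_zero)
              have hp : 0 < c p := Nat.pos_of_ne_zero hp0
              have hzc : ∀ l, l ≠ p → c l = 0 := fun l hl =>
                Nat.le_zero.mp (hmc2 p l (fun h => hl h.symm) hp)
              have hcp : c p = k + 1 := by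
                rw [← hcs]
                exact (Finset.sum_eq_single_of_mem p (Finset.mem_univ p)
                  (fun l _ hl => hzc l hl)).symm
              have hck : c = Pi.single p (k + 1) := by
                funext l
                by_cases hl : l = p
                · subst hl; rw [Pi.single_eq_same, hcp]
                · rw [Pi.single_eq_of_ne hl, hzc l hl]
              obtain ⟨j, hj⟩ := edge (Pi.single p k) p
              rw [← Pi.single_add, IH (Pi.single p k) (ssum p k)] at hj
              rw [hck, hj] at hc
              have heval := congrFun hc (τ p)
              simp only [Pi.add_apply, Equiv.symm_apply_apply, Pi.single_eq_same,
                Pi.single_apply] at heval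
              have hpi : τ p = τ i := by
                by_contra h
                rw [if_neg h] at heval
                split_ifs at heval <;> omega
              rw [hck, τ.injective hpi]
          rw [hcsingle] at hc
          rw [hsingle, hc]
          funext l
          by_cases hl : τ.symm l = i
          · have hl2 : l = τ i := by rw [← hl, Equiv.apply_symm_apply]
            rw [hl, hl2, Pi.single_eq_same, Pi.single_eq_same]
          · have hl2 : l ≠ τ i := fun h => hl (by rw [h, Equiv.symm_apply_apply])
            rw [Pi.single_eq_of_ne hl2, Pi.single_eq_of_ne hl]
  refine ⟨τ, fun a => ?_⟩
  rw [← hvφ a, main (∑ l, a l) a rfl]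
  rfl
end

section
/- The monoid S = ⟨x, y ; x² = y²⟩ (the monoid on two generators with the single relation x² = y²) is of I-type: there exists a bijection v : ℕ² → S with v(0,0) = 1 such that for all (a,b) ∈ ℕ², {v(a+1, b), v(a, b+1)} = {x·v(a,b), y·v(a,b)}. -/
/-- The defining relation `x² = y²` on the free monoid on two generators. -/
def sqRel : FreeMonoid (Fin 2) → FreeMonoid (Fin 2) → Prop := fun a b =>
  a = FreeMonoid.of 0 * FreeMonoid.of 0 ∧ b = FreeMonoid.of 1 * FreeMonoid.of 1

/-- The monoid `⟨x, y ; x² = y²⟩`. -/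
abbrev SqMonoid : Type := (conGen sqRel).Quotient

/-- The generator `x` of `⟨x, y ; x² = y²⟩`. -/
def sqX : SqMonoid := (conGen sqRel).mk' (FreeMonoid.of 0)

/-- The generator `y` of `⟨x, y ; x² = y²⟩`. -/
def sqY : SqMonoid := (conGen sqRel).mk' (FreeMonoid.of 1)

/-!
Let `x` and `y` act on `ℕ × ℕ` by a staircase rule: at a point `(a, b)` with `a + b` even, `x`
steps right and `y` steps up; with `a + b` odd, the other way round. Both `x²` and `y²` then move
one step diagonally, so this is an action of `S`. Define `v (a, b)` by left-multiplying
`v (a - 1, b)`, resp. `v (0, b - 1)`, by the generator stepping to `(a, b)`; `x² = y²` shows that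
`v (a, b + 1)` is then also obtained from `v (a, b)` by the generator stepping up, which is the
I-type condition. Since `v (a, b) • (0, 0) = (a, b)`, `v` is injective; its image contains `1` and
is closed under left multiplication by `x` and `y`, so `v` is surjective.
-/

namespace SqMonoid

theorem sqX_mul_sqX : sqX * sqX = sqY * sqY :=
  PresentedMonoid.mk_eq_mk_of_rel (rels := sqRel) ⟨rfl, rfl⟩

theorem closure_sqX_sqY : Submonoid.closure {sqX, sqY} = ⊤ := by
  have h : (Set.range (PresentedMonoid.of sqRel) : Set SqMonoid) = {sqX, sqY} := by
    ext w
    constructor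
    · rintro ⟨i, rfl⟩
      fin_cases i
      exacts [Or.inl rfl, Or.inr rfl]
    · rintro (rfl | rfl)
      exacts [⟨0, rfl⟩, ⟨1, rfl⟩]
  exact h ▸ PresentedMonoid.closure_range_of sqRel

def stepX (p : ℕ × ℕ) : ℕ × ℕ := if Even (p.1 + p.2) then (p.1 + 1, p.2) else (p.1, p.2 + 1)
def stepY (p : ℕ × ℕ) : ℕ × ℕ := if Even (p.1 + p.2) then (p.1, p.2 + 1) else (p.1 + 1, p.2)

theorem stepX_stepX (p : ℕ × ℕ) : stepX (stepX p) = stepY (stepY p) := by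
  obtain ⟨a, b⟩ := p
  by_cases h : Even (a + b) <;>
    simp [stepX, stepY, h, ← add_assoc, Nat.even_add_one, add_right_comm _ 1]

def toEnd : SqMonoid →* Function.End (ℕ × ℕ) :=
  (conGen sqRel).lift (FreeMonoid.lift ![stepX, stepY]) <| Con.conGen_le.2 <| by
    rintro _ _ ⟨rfl, rfl⟩
    exact funext stepX_stepX

instance : MulAction SqMonoid (ℕ × ℕ) := MulAction.compHom _ toEnd

theorem sqX_smul (p : ℕ × ℕ) : sqX • p = stepX p := rfl
theorem sqY_smul (p : ℕ × ℕ) : sqY • p = stepY p := rfl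

def word : ℕ → ℕ → SqMonoid
  | 0, 0 => 1
  | 0, b + 1 => (if Even b then sqY else sqX) * word 0 b
  | a + 1, b => (if Even (a + b) then sqX else sqY) * word a b

theorem word_succ_right (a b : ℕ) :
    word a (b + 1) = (if Even (a + b) then sqY else sqX) * word a b := by
  induction a with
  | zero => simp [word]
  | succ a ih =>
    simp only [word, ih, ← mul_assoc, ← add_assoc, add_right_comm a 1 b, Nat.even_add_one]
    by_cases h : Even (a + b) <;> simp [h, sqX_mul_sqX]

theorem word_smul_zero (a b : ℕ) : word a b • (0, 0) = (a, b) := by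
  induction a, b using word.induct with
  | case1 => simp [word]
  | case2 b ih =>
    by_cases h : Even b <;> simp [word, mul_smul, ih, h, sqX_smul, sqY_smul, stepX, stepY]
  | case3 a b ih =>
    by_cases h : Even (a + b) <;> simp [word, mul_smul, ih, h, sqX_smul, sqY_smul, stepX, stepY]

theorem word_uncurry_injective : Function.Injective (Function.uncurry word) :=
  Function.LeftInverse.injective (g := (· • (0, 0))) fun p => word_smul_zero p.1 p.2

theorem pair_word_succ (a b : ℕ) :
    ({word (a + 1) b, word a (b + 1)} : Set SqMonoid) = {sqX * word a b, sqY * word a b} := by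
  by_cases h : Even (a + b) <;> simp [word, word_succ_right, h, Set.pair_comm]

theorem word_uncurry_surjective : Function.Surjective (Function.uncurry word) := by
  intro w
  induction w using Submonoid.induction_of_closure_eq_top_left closure_sqX_sqY with
  | one => exact ⟨(0, 0), word.eq_1⟩
  | mul_left g hg w ih =>
    obtain ⟨⟨a, b⟩, rfl⟩ := ih
    have hmem : g * word a b ∈ ({word (a + 1) b, word a (b + 1)} : Set SqMonoid) := by
      rw [pair_word_succ]; rcases hg with rfl | rfl <;> simp
    rcases hmem with h | h
    · exact ⟨(a + 1, b), h.symm⟩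
    · exact ⟨(a, b + 1), h.symm⟩

end SqMonoid

theorem sqMonoid_is_I_type :
    ∃ v : ℕ × ℕ → SqMonoid, Function.Bijective v ∧ v (0, 0) = 1 ∧
      ∀ a b : ℕ,
        ({v (a + 1, b), v (a, b + 1)} : Set SqMonoid) =
          ({sqX * v (a, b), sqY * v (a, b)} : Set SqMonoid) :=
  ⟨Function.uncurry SqMonoid.word,
    ⟨SqMonoid.word_uncurry_injective, SqMonoid.word_uncurry_surjective⟩,
    SqMonoid.word.eq_1, SqMonoid.pair_word_succ⟩
end

section
/- In the monoid S = ⟨x, y ; x² = y²⟩, every element has a unique normal form, and the number of elements of S of length (total degree) m equals m + 1 for all m ≥ 0; in particular S has the same growth function as the free commutative monoid ℕ² graded by total degree, matching |{(a,b) ∈ ℕ² : a + b = m}|. -/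
namespace SqAux

/-- The projection. -/
def mk : FreeMonoid (Fin 2) →* SqMonoid := (conGen sqRel).mk'

/-- The image of the generator `x`. -/
def X : SqMonoid := mk (FreeMonoid.of 0)

/-- The image of the generator `y`. -/
def Y : SqMonoid := mk (FreeMonoid.of 1)

lemma sq_eq : X * X = Y * Y := by
  have h : conGen sqRel (FreeMonoid.of 0 * FreeMonoid.of 0)
      (FreeMonoid.of 1 * FreeMonoid.of 1) := ConGen.Rel.of _ _ ⟨rfl, rfl⟩
  have h2 : mk (FreeMonoid.of 0 * FreeMonoid.of 0) = mk (FreeMonoid.of 1 * FreeMonoid.of 1) :=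
    (Con.eq _).mpr h
  rw [map_mul, map_mul] at h2; exact h2

lemma hZX : Commute (X * X) X := (Commute.refl X).mul_left (Commute.refl X)

lemma hZY : Commute (X * X) Y := by
  show (X * X) * Y = Y * (X * X)
  rw [sq_eq, mul_assoc]

lemma gen_comm (a : Fin 2) : Commute (X * X) (mk (FreeMonoid.of a)) := by
  fin_cases a
  · exact hZX
  · exact hZY

/-- The two defining functions of the invariant. -/
def f : Fin 2 → Function.End ℤ := ![fun v => -v, fun v => 1 - v]

def F : FreeMonoid (Fin 2) →* Function.End ℤ := FreeMonoid.lift f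

lemma key : conGen sqRel ≤ Con.ker F := by
  apply Con.conGen_le.mpr
  rintro a b ⟨rfl, rfl⟩
  show F _ = F _
  rw [map_mul, map_mul]
  funext v
  show (F (FreeMonoid.of 0)) ((F (FreeMonoid.of 0)) v) =
    (F (FreeMonoid.of 1)) ((F (FreeMonoid.of 1)) v)
  simp [F, f, FreeMonoid.lift_eval_of]

/-- The invariant homomorphism. -/
def Φ : SqMonoid →* Function.End ℤ := Con.lift _ F key

lemma Φ_mk (w : FreeMonoid (Fin 2)) : Φ (mk w) = F w := Con.lift_mk' key w

lemma phiX (v : ℤ) : Φ X v = -v := by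
  show (Φ (mk (FreeMonoid.of 0))) v = -v
  rw [Φ_mk]
  simp [F, f, FreeMonoid.lift_eval_of]

lemma phiY (v : ℤ) : Φ Y v = 1 - v := by
  show (Φ (mk (FreeMonoid.of 1))) v = 1 - v
  rw [Φ_mk]
  simp [F, f, FreeMonoid.lift_eval_of]

lemma phi_mul (a b : SqMonoid) (v : ℤ) : Φ (a * b) v = Φ a (Φ b v) := by
  rw [map_mul]; rfl

lemma phi_one (v : ℤ) : Φ (1 : SqMonoid) v = v := by
  rw [map_one]; rfl

lemma phiXY_pow (j : ℕ) (v : ℤ) : Φ ((X * Y) ^ j) v = v - j := by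
  induction j generalizing v with
  | zero => simp [phi_one]
  | succ n ih =>
    rw [pow_succ, phi_mul, phi_mul, phiY, phiX, ih]
    push_cast; ring

lemma phiYX_pow (j : ℕ) (v : ℤ) : Φ ((Y * X) ^ j) v = v + j := by
  induction j generalizing v with
  | zero => simp [phi_one]
  | succ n ih =>
    rw [pow_succ, phi_mul, phi_mul, phiX, phiY, ih]
    push_cast; ring

lemma phiX_pow_zero (r : ℕ) : Φ (X ^ r) 0 = 0 := by
  induction r with
  | zero => simp [phi_one]
  | succ n ih =>
    rw [pow_succ, phi_mul, phiX]
    simpa using ih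

lemma phiY_pow (r : ℕ) (v : ℤ) : Φ (Y ^ r) v = if r % 2 = 0 then v else 1 - v := by
  induction r generalizing v with
  | zero => simp [phi_one]
  | succ n ih =>
    rw [pow_succ, phi_mul, phiY, ih]
    rcases Nat.mod_two_eq_zero_or_one n with h | h
    · have h' : (n + 1) % 2 = 1 := by omega
      simp [h, h']
    · have h' : (n + 1) % 2 = 0 := by omega
      simp [h, h']

/-- The numerical invariant. -/
def cval (s : SqMonoid) : ℤ := Φ s 0

lemma cval_branch1 (j r : ℕ) : cval ((X * Y) ^ j * X ^ r) = -(j : ℤ) := by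
  unfold cval
  rw [phi_mul, phiX_pow_zero, phiXY_pow]
  ring

lemma cval_branch2 (p r : ℕ) : cval ((Y * X) ^ p * Y ^ r) = ((r % 2 : ℕ) : ℤ) + p := by
  unfold cval
  rw [phi_mul, phiY_pow, phiYX_pow]
  rcases Nat.mod_two_eq_zero_or_one r with h | h <;> simp [h]

/-- The normal forms of length `m`, indexed by `j ≤ m`. -/
noncomputable def W (m j : ℕ) : SqMonoid :=
  if j ≤ m / 2 then (X * Y) ^ j * X ^ (m - 2 * j)
  else (Y * X) ^ (j - (m + 1) / 2) * Y ^ (m - 2 * (j - (m + 1) / 2))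

lemma cval_W (m j : ℕ) (hj : j ≤ m) :
    cval (W m j) = if j ≤ m / 2 then -(j : ℤ)
      else ((j - (m + 1) / 2 : ℕ) : ℤ) + ((m % 2 : ℕ) : ℤ) := by
  unfold W
  split_ifs with h
  · exact cval_branch1 j _
  · rw [cval_branch2]
    have h2 : (m - 2 * (j - (m + 1) / 2)) % 2 = m % 2 := by omega
    rw [h2]
    ring

lemma W_inj (m : ℕ) : Set.InjOn (W m) (Set.Iic m) := by
  intro a ha b hb hab
  have hab' := congrArg cval hab
  rw [cval_W m a ha, cval_W m b hb] at hab'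
  simp only [Set.mem_Iic] at ha hb
  split_ifs at hab' <;> omega

lemma len_pow (w : FreeMonoid (Fin 2)) (n : ℕ) : (w ^ n).length = n * w.length := by
  induction n with
  | zero => rw [pow_zero, zero_mul]; rfl
  | succ k ih => rw [pow_succ, FreeMonoid.length_mul, ih]; ring

lemma W_mem (m j : ℕ) (hj : j ≤ m) :
    W m j ∈ {s : SqMonoid | ∃ w : FreeMonoid (Fin 2),
        w.length = m ∧ (conGen sqRel).mk' w = s} := by
  unfold W
  split_ifs with h
  · refine ⟨(FreeMonoid.of 0 * FreeMonoid.of 1) ^ j * (FreeMonoid.of 0) ^ (m - 2 * j), ?_, ?_⟩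
    · rw [FreeMonoid.length_mul, len_pow, len_pow, FreeMonoid.length_mul,
        FreeMonoid.length_of, FreeMonoid.length_of]
      omega
    · show mk _ = _
      rw [map_mul, map_pow, map_pow, map_mul]
      rfl
  · refine ⟨(FreeMonoid.of 1 * FreeMonoid.of 0) ^ (j - (m + 1) / 2) *
      (FreeMonoid.of 1) ^ (m - 2 * (j - (m + 1) / 2)), ?_, ?_⟩
    · rw [FreeMonoid.length_mul, len_pow, len_pow, FreeMonoid.length_mul,
        FreeMonoid.length_of, FreeMonoid.length_of]
      omega
    · show mk _ = _
      rw [map_mul, map_pow, map_pow, map_mul]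
      rfl

/-- Swap of the two generators. -/
def sw : Fin 2 → Fin 2 := fun s => if s = 0 then 1 else 0

lemma sw_sw (s : Fin 2) : sw (sw s) = s := by fin_cases s <;> rfl

/-- Alternating word of length `n` starting with `s`. -/
def altw : ℕ → Fin 2 → FreeMonoid (Fin 2)
  | 0, _ => 1
  | n + 1, s => FreeMonoid.of s * altw n (sw s)

lemma altw_len (n : ℕ) (s : Fin 2) : (altw n s).length = n := by
  induction n generalizing s with
  | zero => rfl
  | succ k ih => rw [altw, FreeMonoid.length_mul, FreeMonoid.length_of, ih]; omega

lemma gen_sq (s : Fin 2) : mk (FreeMonoid.of s) * mk (FreeMonoid.of s) = X * X := by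
  fin_cases s
  · rfl
  · exact sq_eq.symm

/-- Classification: every element is `z^k` times an alternating word. -/
lemma main_class (w : FreeMonoid (Fin 2)) :
    ∃ k l s, 2 * k + l = w.length ∧ mk w = (X * X) ^ k * mk (altw l s) := by
  induction w using FreeMonoid.inductionOn' with
  | one => exact ⟨0, 0, 0, rfl, by simp [altw]⟩
  | of_mul a w ih =>
    obtain ⟨k, l, s, hlen, heq⟩ := ih
    have hmove : mk (FreeMonoid.of a * w) =
        (X * X) ^ k * (mk (FreeMonoid.of a) * mk (altw l s)) := by
      rw [map_mul, heq, ← mul_assoc, ← ((gen_comm a).pow_left k).eq, mul_assoc]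
    have hlen' : (FreeMonoid.of a * w).length = 1 + w.length := by
      rw [FreeMonoid.length_mul, FreeMonoid.length_of]
    cases l with
    | zero =>
      refine ⟨k, 1, a, by omega, ?_⟩
      rw [hmove]
      simp [altw]
    | succ n =>
      by_cases ha : a = s
      · subst ha
        refine ⟨k + 1, n, sw a, by omega, ?_⟩
        rw [hmove, altw, map_mul,
          show mk (FreeMonoid.of a) * (mk (FreeMonoid.of a) * mk (altw n (sw a))) =
            mk (FreeMonoid.of a) * mk (FreeMonoid.of a) * mk (altw n (sw a)) from
            (mul_assoc _ _ _).symm, gen_sq, pow_succ]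
        simp [mul_assoc]
      · refine ⟨k, n + 2, a, by omega, ?_⟩
        have hswa : sw a = s := by fin_cases a <;> fin_cases s <;> simp_all [sw]
        rw [hmove]
        show _ = (X * X) ^ k * mk (FreeMonoid.of a * altw (n + 1) (sw a))
        rw [hswa, map_mul]

lemma altwA (n : ℕ) : mk (altw n 0) = (X * Y) ^ (n / 2) * X ^ (n % 2) := by
  induction n using Nat.twoStepInduction with
  | zero => simp [altw]
  | one => simp [altw, X]
  | more n ih _ =>
    have h1 : (n + 2) / 2 = n / 2 + 1 := by omega
    have h2 : (n + 2) % 2 = n % 2 := by omega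
    show mk (FreeMonoid.of 0 * (FreeMonoid.of (sw 0) * altw n (sw (sw 0)))) = _
    rw [sw_sw]
    show mk (FreeMonoid.of 0 * (FreeMonoid.of 1 * altw n 0)) = _
    rw [map_mul, map_mul, ih, h1, h2, pow_succ', ← mul_assoc, ← mul_assoc]
    rfl

lemma altwB (n : ℕ) : mk (altw n 1) = (Y * X) ^ (n / 2) * Y ^ (n % 2) := by
  induction n using Nat.twoStepInduction with
  | zero => simp [altw]
  | one => simp [altw, Y]
  | more n ih _ =>
    have h1 : (n + 2) / 2 = n / 2 + 1 := by omega
    have h2 : (n + 2) % 2 = n % 2 := by omega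
    show mk (FreeMonoid.of 1 * (FreeMonoid.of (sw 1) * altw n (sw (sw 1)))) = _
    rw [sw_sw]
    show mk (FreeMonoid.of 1 * (FreeMonoid.of 0 * altw n 1)) = _
    rw [map_mul, map_mul, ih, h1, h2, pow_succ', ← mul_assoc, ← mul_assoc]
    rfl

lemma ZpowX (k e : ℕ) : (X * X) ^ k * X ^ e = X ^ (2 * k + e) := by
  rw [pow_add, pow_mul, pow_two]

lemma ZpowY (k e : ℕ) : (X * X) ^ k * Y ^ e = Y ^ (2 * k + e) := by
  rw [pow_add, pow_mul, pow_two, sq_eq]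

lemma surj (w : FreeMonoid (Fin 2)) : ∃ j ≤ w.length, mk w = W w.length j := by
  obtain ⟨k, l, s, hlen, heq⟩ := main_class w
  set m := w.length with hm
  by_cases hs : s = 0 ∨ l = 0
  · -- branch 1
    have hA : mk (altw l s) = (X * Y) ^ (l / 2) * X ^ (l % 2) := by
      rcases hs with rfl | rfl
      · exact altwA l
      · simp [altw]
    refine ⟨l / 2, by omega, ?_⟩
    have hle : l / 2 ≤ m / 2 := by omega
    rw [heq, hA, W, if_pos hle, ← mul_assoc,
      ((hZX.mul_right hZY).pow_pow k (l / 2)).eq, mul_assoc, ZpowX]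
    congr 2
    omega
  · push_neg at hs
    obtain ⟨hs1, hl0⟩ := hs
    have hs' : s = 1 := by fin_cases s <;> simp_all
    subst hs'
    have hA : mk (altw l 1) = (Y * X) ^ (l / 2) * Y ^ (l % 2) := altwB l
    refine ⟨(m + 1) / 2 + l / 2, by omega, ?_⟩
    have hgt : ¬ ((m + 1) / 2 + l / 2 ≤ m / 2) := by omega
    have hp : (m + 1) / 2 + l / 2 - (m + 1) / 2 = l / 2 := by omega
    rw [heq, hA, W, if_neg hgt, hp, ← mul_assoc,
      ((hZY.mul_right hZX).pow_pow k (l / 2)).eq, mul_assoc, ZpowY]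
    congr 2
    omega

end SqAux

theorem sqMonoid_growth (m : ℕ) :
    {s : SqMonoid | ∃ w : FreeMonoid (Fin 2),
        w.length = m ∧ (conGen sqRel).mk' w = s}.ncard = m + 1 := by
  have hset : {s : SqMonoid | ∃ w : FreeMonoid (Fin 2),
      w.length = m ∧ (conGen sqRel).mk' w = s} = SqAux.W m '' Set.Iic m := by
    ext s
    constructor
    · rintro ⟨w, hw, rfl⟩
      obtain ⟨j, hj, hWj⟩ := SqAux.surj w
      rw [hw] at hj hWj
      exact ⟨j, hj, hWj.symm⟩
    · rintro ⟨j, hj, rfl⟩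
      exact SqAux.W_mem m j hj
  rw [hset, Set.ncard_image_of_injOn (SqAux.W_inj m), ← Finset.coe_Iic,
    Set.ncard_coe_finset, Nat.card_Iic]
end

section
/- Let X be a finite set and r : X × X → X × X an involutive map (r² = id) satisfying the set-theoretic Yang–Baxter equation r₁r₂r₁ = r₂r₁r₂ on X³ (where r₁ = r × id, r₂ = id × r), with r(x,x) = (x,x) for all x. Suppose additionally that for all a,b ∈ X there exist unique c,d with r(c,a) = (d,b), that a = b implies c = d, and that r₁r₂ maps {(x,x,y) : x,y ∈ X} onto {(y,x,x) : x,y ∈ X}. Then the subgroup of permutations of X³ generated by r₁ and r₂ has all orbits of cardinality 1, 3, or 6. -/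
/-- `r` acting on the first two coordinates of `X³`. -/
def r₁ {X : Type*} (r : X × X → X × X) : X × X × X → X × X × X :=
  fun p => ((r (p.1, p.2.1)).1, (r (p.1, p.2.1)).2, p.2.2)

/-- `r` acting on the last two coordinates of `X³`. -/
def r₂ {X : Type*} (r : X × X → X × X) : X × X × X → X × X × X :=
  fun p => (p.1, r p.2)

theorem yang_baxter_orbit_sizes {X : Type*} [Finite X] (r : X × X → X × X)
    (hinv : r ∘ r = id)
    (hdiag : ∀ x : X, r (x, x) = (x, x))
    (hYB : r₁ r ∘ r₂ r ∘ r₁ r = r₂ r ∘ r₁ r ∘ r₂ r)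
    (hnd : ∀ a b : X, ∃! cd : X × X, r (cd.1, a) = (cd.2, b))
    (hdd : ∀ a c d : X, r (c, a) = (d, a) → c = d)
    (hcyc : (r₁ r ∘ r₂ r) '' {p : X × X × X | p.1 = p.2.1} =
      {p : X × X × X | p.2.1 = p.2.2}) :
    ∀ p : X × X × X,
      {q : X × X × X |
          Relation.ReflTransGen (fun u w => w = r₁ r u ∨ w = r₂ r u) p q}.ncard
        ∈ ({1, 3, 6} : Set ℕ) := by
  classical
  intro p
  have hr : ∀ q : X × X, r (r q) = q := fun q => congrFun hinv q
  set f := r₁ r with hf_def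
  set g := r₂ r with hg_def
  have hf : ∀ q, f (f q) = q := by
    intro q
    simp only [hf_def, r₁, Prod.mk.eta, hr]
  have hg : ∀ q, g (g q) = q := by
    intro q
    simp only [hg_def, r₂, Prod.mk.eta, hr]
  have hb : ∀ q, f (g (f q)) = g (f (g q)) := fun q => congrFun hYB q
  have finj : ∀ a b, f a = f b → a = b := by
    intro a b h
    have := congrArg f h
    rwa [hf, hf] at this
  have ginj : ∀ a b, g a = g b → a = b := by
    intro a b h
    have := congrArg g h
    rwa [hg, hg] at this
  have key : ∀ q : X × X × X, f q = g q → f q = q := by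
    intro q h
    obtain ⟨x, y, z⟩ := q
    simp only [hf_def, hg_def, r₁, r₂, Prod.ext_iff] at h ⊢
    obtain ⟨e1, e2, e3⟩ := h
    have e4 : y = (r (y, z)).1 :=
      hdd z y (r (y, z)).1 (Prod.ext_iff.mpr ⟨rfl, e3.symm⟩)
    exact ⟨e1, e2.trans e4.symm, trivial⟩
  set S : Set (X × X × X) := {p, f p, g p, f (g p), g (f p), f (g (f p))} with hS_def
  have hpS : p ∈ S := by left; rfl
  have hfS : ∀ q ∈ S, f q ∈ S := by
    intro q hq
    simp only [hS_def, Set.mem_insert_iff, Set.mem_singleton_iff] at hq ⊢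
    rcases hq with rfl | rfl | rfl | rfl | rfl | rfl
    · tauto
    · rw [hf]; tauto
    · tauto
    · rw [hf]; tauto
    · tauto
    · rw [hf]; tauto
  have hgS : ∀ q ∈ S, g q ∈ S := by
    intro q hq
    simp only [hS_def, Set.mem_insert_iff, Set.mem_singleton_iff] at hq ⊢
    rcases hq with rfl | rfl | rfl | rfl | rfl | rfl
    · tauto
    · tauto
    · rw [hg]; tauto
    · rw [← hb]; tauto
    · rw [hg]; tauto
    · have : g (f (g (f p))) = f (g p) := by
        rw [← hb (f p), hf]
      rw [this]; tauto
  have horb : {q | Relation.ReflTransGen (fun u w => w = f u ∨ w = g u) p q} = S := by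
    apply Set.Subset.antisymm
    · intro q hq
      induction hq with
      | refl => exact hpS
      | tail _ hstep ih =>
        rcases hstep with rfl | rfl
        · exact hfS _ ih
        · exact hgS _ ih
    · intro q hq
      simp only [hS_def, Set.mem_insert_iff, Set.mem_singleton_iff] at hq
      rcases hq with rfl | rfl | rfl | rfl | rfl | rfl
      · exact .refl
      · exact .single (Or.inl rfl)
      · exact .single (Or.inr rfl)
      · exact .tail (.single (Or.inr rfl)) (Or.inl rfl)
      · exact .tail (.single (Or.inl rfl)) (Or.inr rfl)
      · exact .tail (.tail (.single (Or.inl rfl)) (Or.inr rfl)) (Or.inl rfl)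
  rw [horb]
  by_cases h1 : f p = p
  · by_cases h2 : g p = p
    · -- size 1
      have hS1 : S = {p} := by
        ext q
        simp only [hS_def, h1, h2, Set.mem_insert_iff, Set.mem_singleton_iff]
        tauto
      rw [hS1, Set.ncard_singleton]
      left; rfl
    · -- size 3 : {p, g p, f (g p)}
      have n1 : p ≠ g p := fun h => h2 h.symm
      have n2 : p ≠ f (g p) := by
        intro h
        have := congrArg f h
        rw [hf, h1] at this
        exact h2 this.symm
      have n3 : g p ≠ f (g p) := by
        intro h
        apply h2
        have hb' := hb p
        rw [h1, ← h, hg] at hb'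
        exact hb'
      have hS3 : S = {p, g p, f (g p)} := by
        ext q
        simp only [hS_def, h1, Set.mem_insert_iff, Set.mem_singleton_iff]
        tauto
      rw [hS3, Set.ncard_insert_of_notMem (by
          simp only [Set.mem_insert_iff, Set.mem_singleton_iff]
          push_neg
          exact ⟨n1, n2⟩), Set.ncard_pair n3]
      right; left; rfl
  · by_cases h2 : g p = p
    · -- size 3 : {p, f p, g (f p)}
      have n1 : p ≠ f p := fun h => h1 h.symm
      have n2 : p ≠ g (f p) := by
        intro h
        have := congrArg g h
        rw [hg, h2] at this
        exact h1 this.symm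
      have n3 : f p ≠ g (f p) := by
        intro h
        have hb' := hb p
        rw [h2, ← h, hf] at hb'
        exact h1 hb'.symm
      have e : f (g (f p)) = g (f p) := by
        rw [hb p, h2]
      have hS3 : S = {p, f p, g (f p)} := by
        ext q
        simp only [hS_def, h2, e, Set.mem_insert_iff, Set.mem_singleton_iff]
        tauto
      rw [hS3, Set.ncard_insert_of_notMem (by
          simp only [Set.mem_insert_iff, Set.mem_singleton_iff]
          push_neg
          exact ⟨n1, n2⟩), Set.ncard_pair n3]
      right; left; rfl
    · have h3 : f p ≠ g p := fun h => h1 (key p h)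
      have n01 : p ≠ f p := fun h => h1 h.symm
      have n02 : p ≠ g p := fun h => h2 h.symm
      by_cases h4 : g (f p) = f p
      · -- size 3 : {p, f p, g p}
        have e3 : f (g p) = g p := by
          have hb' := hb p
          rw [h4, hf] at hb'
          have := congrArg g hb'
          rw [hg] at this
          exact this.symm
        have hS3 : S = {p, f p, g p} := by
          ext q
          simp only [hS_def, h4, e3, hf, Set.mem_insert_iff, Set.mem_singleton_iff]
          tauto
        rw [hS3, Set.ncard_insert_of_notMem (by
            simp only [Set.mem_insert_iff, Set.mem_singleton_iff]
            push_neg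
            exact ⟨n01, n02⟩), Set.ncard_pair h3]
        right; left; rfl
      · -- size 6
        have n14 : f p ≠ g (f p) := fun h => h4 h.symm
        have n03 : p ≠ f (g p) := by
          intro h
          have := congrArg f h
          rw [hf] at this
          exact h3 this
        have n04 : p ≠ g (f p) := by
          intro h
          have := congrArg g h
          rw [hg] at this
          exact h3 this.symm
        have n05 : p ≠ f (g (f p)) := by
          intro h
          have := congrArg f h
          rw [hf] at this
          exact n14 this
        have n13 : f p ≠ f (g p) := fun h => h2 ((finj _ _ h).symm)
        have n15 : f p ≠ f (g (f p)) := fun h => n04 (finj _ _ h)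
        have n23 : g p ≠ f (g p) := by
          intro h
          have hb' := hb p
          rw [← h, hg] at hb'
          have := congrArg f hb'
          rw [hf] at this
          exact h4 this
        have n24 : g p ≠ g (f p) := fun h => h1 ((ginj _ _ h).symm)
        have n25 : g p ≠ f (g (f p)) := by
          intro h
          rw [hb p] at h
          exact n03 (ginj _ _ h)
        have n34 : f (g p) ≠ g (f p) := by
          intro h
          have := congrArg f h
          rw [hf] at this
          exact n25 this
        have n35 : f (g p) ≠ f (g (f p)) := fun h => n24 (finj _ _ h)
        have n45 : g (f p) ≠ f (g (f p)) := by
          intro h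
          rw [hb p] at h
          exact n13 (ginj _ _ h)
        rw [hS_def]
        rw [Set.ncard_insert_of_notMem (by
            simp only [Set.mem_insert_iff, Set.mem_singleton_iff]
            push_neg
            exact ⟨n01, n02, n03, n04, n05⟩),
          Set.ncard_insert_of_notMem (by
            simp only [Set.mem_insert_iff, Set.mem_singleton_iff]
            push_neg
            exact ⟨h3, n13, n14, n15⟩),
          Set.ncard_insert_of_notMem (by
            simp only [Set.mem_insert_iff, Set.mem_singleton_iff]
            push_neg
            exact ⟨n23, n24, n25⟩),
          Set.ncard_insert_of_notMem (by
            simp only [Set.mem_insert_iff, Set.mem_singleton_iff]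
            push_neg
            exact ⟨n34, n35⟩),
          Set.ncard_pair n45]
        right; right; rfl
end
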